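/- Let X and Y be jointly distributed finitely-valued random variables and let B = b(X) and L = ℓ(Y) for arbitrary functions b, ℓ. Then I(Y; B, L) ≤ I(Y; L) + I(X; Y) − H(X) + H(B) + H(X | Y, B). -/

import Mathlib

open scoped BigOperators

/-- A probability mass function on a finite type, real-valued. -/
structure FinPMF (α : Type) [Fintype α] where
  p : α → ℝ
  nonneg : ∀ a, 0 ≤ p a
  sum_one : ∑ a, p a = 1

namespace FinPMF

variable {Ω : Type} [Fintype Ω]

/-- The distribution (pushforward pmf) of a finitely-valued random variable. -/
def dist {α : Type} [Fintype α] [DecidableEq α] (μ : FinPMF Ω) (X : Ω → α) (a : α) : ℝ :=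
  ∑ ω, if X ω = a then μ.p ω else 0

/-- Shannon entropy `H(X)` (natural logarithm). -/
noncomputable def H {α : Type} [Fintype α] [DecidableEq α] (μ : FinPMF Ω) (X : Ω → α) : ℝ :=
  -∑ a, dist μ X a * Real.log (dist μ X a)

/-- Mutual information `I(X;Y)`. -/
noncomputable def MI {α β : Type} [Fintype α] [DecidableEq α] [Fintype β] [DecidableEq β]
    (μ : FinPMF Ω) (X : Ω → α) (Y : Ω → β) : ℝ :=
  H μ X + H μ Y - H μ (fun ω => (X ω, Y ω))

/-- Conditional entropy `H(X|Y)`. -/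
noncomputable def condH {α β : Type} [Fintype α] [DecidableEq α] [Fintype β] [DecidableEq β]
    (μ : FinPMF Ω) (X : Ω → α) (Y : Ω → β) : ℝ :=
  H μ (fun ω => (X ω, Y ω)) - H μ Y

/-- Conditional mutual information `I(X;Y|Z)`. -/
noncomputable def condMI {α β γ : Type} [Fintype α] [DecidableEq α] [Fintype β] [DecidableEq β]
    [Fintype γ] [DecidableEq γ] (μ : FinPMF Ω) (X : Ω → α) (Y : Ω → β) (Z : Ω → γ) : ℝ :=
  condH μ X Z + condH μ Y Z - condH μ (fun ω => (X ω, Y ω)) Z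

open scoped Classical in
/-- Probability of an event. -/
noncomputable def prob (μ : FinPMF Ω) (S : Ω → Prop) : ℝ :=
  ∑ ω, if S ω then μ.p ω else 0

/-- Conditional independence: `A` and `C` are conditionally independent given `B`
(the Markov chain `A ↔ B ↔ C`). -/
def CondIndep {α β γ : Type} [Fintype α] [DecidableEq α] [Fintype β] [DecidableEq β]
    [Fintype γ] [DecidableEq γ] (μ : FinPMF Ω) (A : Ω → α) (B : Ω → β) (C : Ω → γ) : Prop :=
  ∀ a b c, dist μ (fun ω => (A ω, B ω, C ω)) (a, b, c) * dist μ B b =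
    dist μ (fun ω => (A ω, B ω)) (a, b) * dist μ (fun ω => (B ω, C ω)) (b, c)

/-- The i.i.d. product pmf on `Fin n → Ω`. -/
def iid (μ : FinPMF Ω) (n : ℕ) : FinPMF (Fin n → Ω) where
  p := fun ω => ∏ i, μ.p (ω i)
  nonneg := fun ω => Finset.prod_nonneg fun i _ => μ.nonneg _
  sum_one := by
    have h := Finset.prod_univ_sum (fun _ : Fin n => (Finset.univ : Finset Ω))
      (fun _ a => μ.p a)
    rw [Fintype.piFinset_univ] at h
    rw [← h]
    simp [μ.sum_one]

/-- The product of two pmfs. -/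
def prodPMF {α β : Type} [Fintype α] [Fintype β] (μ : FinPMF α) (ν : FinPMF β) :
    FinPMF (α × β) where
  p := fun ab => μ.p ab.1 * ν.p ab.2
  nonneg := fun ab => mul_nonneg (μ.nonneg _) (ν.nonneg _)
  sum_one := by
    rw [Fintype.sum_prod_type]
    simp_rw [← Finset.mul_sum, ν.sum_one, mul_one]
    exact μ.sum_one

/-- The uniform pmf on a nonempty finite type. -/
noncomputable def uniform (α : Type) [Fintype α] (h : Nonempty α) : FinPMF α where
  p := fun _ => (Fintype.card α : ℝ)⁻¹
  nonneg := fun _ => by positivity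
  sum_one := by
    have hc : (0:ℝ) < Fintype.card α := by
      exact_mod_cast Fintype.card_pos_iff.mpr h
    simp only [Finset.sum_const, Finset.card_univ, nsmul_eq_mul]
    field_simp

/-- The pushforward pmf of a random variable. -/
def push {α : Type} [Fintype α] [DecidableEq α] (μ : FinPMF Ω) (X : Ω → α) : FinPMF α where
  p := dist μ X
  nonneg := fun a => Finset.sum_nonneg fun ω _ => by
    split <;> simp [μ.nonneg]
  sum_one := by
    unfold dist
    rw [Finset.sum_comm]
    simp [μ.sum_one]

end FinPMF

/-!
Expanding mutual information and conditional entropy into joint entropies, and using that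
adjoining a function of a variable does not change entropy (`H(Y, B, L) = H(Y, B)`,
`H(Y, L) = H(Y)`, `H(X, Y, B) = H(X, Y)`), the inequality reduces to the subadditivity
`H(B, L) ≤ H(B) + H(L)`, i.e. to `0 ≤ I(B; L)`, which is Gibbs' inequality.
-/

namespace FinPMF

lemma mul_log_add_log_sub_log_le {p q r : ℝ} (hp : 0 ≤ p) (hpq : p ≤ q) (hpr : p ≤ r) :
    p * (Real.log q + Real.log r - Real.log p) ≤ q * r - p := by
  rcases hp.eq_or_lt with rfl | hp
  · simpa using mul_nonneg hpq hpr
  have hq : 0 < q := hp.trans_le hpq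
  have hr : 0 < r := hp.trans_le hpr
  have hlog := Real.log_le_sub_one_of_pos (show 0 < q * r / p by positivity)
  rw [Real.log_div (by positivity) hp.ne', Real.log_mul hq.ne' hr.ne'] at hlog
  calc p * (Real.log q + Real.log r - Real.log p) ≤ p * (q * r / p - 1) :=
        mul_le_mul_of_nonneg_left hlog hp.le
    _ = q * r - p := by field_simp

section

variable {Ω α β : Type} [Fintype Ω] [Fintype α] [DecidableEq α] [Fintype β] [DecidableEq β]

lemma dist_nonneg (μ : FinPMF Ω) (A : Ω → α) (a : α) : 0 ≤ dist μ A a :=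
  (push μ A).nonneg a

lemma sum_dist (μ : FinPMF Ω) (A : Ω → α) : ∑ a, dist μ A a = 1 :=
  (push μ A).sum_one

lemma sum_dist_pair_right (μ : FinPMF Ω) (A : Ω → α) (B : Ω → β) (a : α) :
    ∑ y, dist μ (fun ω => (A ω, B ω)) (a, y) = dist μ A a := by
  unfold dist
  rw [Finset.sum_comm]
  refine Finset.sum_congr rfl fun ω _ => ?_
  by_cases h : A ω = a <;> simp [Prod.ext_iff, h]

lemma sum_dist_pair_left (μ : FinPMF Ω) (A : Ω → α) (B : Ω → β) (y : β) :
    ∑ a, dist μ (fun ω => (A ω, B ω)) (a, y) = dist μ B y := by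
  unfold dist
  rw [Finset.sum_comm]
  refine Finset.sum_congr rfl fun ω _ => ?_
  by_cases h : B ω = y <;> simp [Prod.ext_iff, h]

lemma dist_pair_le_fst (μ : FinPMF Ω) (A : Ω → α) (B : Ω → β) (a : α) (y : β) :
    dist μ (fun ω => (A ω, B ω)) (a, y) ≤ dist μ A a := by
  rw [← sum_dist_pair_right μ A B a]
  exact Finset.single_le_sum (fun z _ => dist_nonneg μ _ (a, z)) (Finset.mem_univ y)

lemma dist_pair_le_snd (μ : FinPMF Ω) (A : Ω → α) (B : Ω → β) (a : α) (y : β) :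
    dist μ (fun ω => (A ω, B ω)) (a, y) ≤ dist μ B y := by
  rw [← sum_dist_pair_left μ A B y]
  exact Finset.single_le_sum (fun z _ => dist_nonneg μ _ (z, y)) (Finset.mem_univ a)

lemma sum_dist_pair_mul_fst (μ : FinPMF Ω) (A : Ω → α) (B : Ω → β) (f : α → ℝ) :
    ∑ x : α × β, dist μ (fun ω => (A ω, B ω)) x * f x.1 = ∑ a, dist μ A a * f a := by
  rw [Fintype.sum_prod_type]
  refine Finset.sum_congr rfl fun a _ => ?_
  rw [← sum_dist_pair_right μ A B a, Finset.sum_mul]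

lemma sum_dist_pair_mul_snd (μ : FinPMF Ω) (A : Ω → α) (B : Ω → β) (f : β → ℝ) :
    ∑ x : α × β, dist μ (fun ω => (A ω, B ω)) x * f x.2 = ∑ y, dist μ B y * f y := by
  rw [Fintype.sum_prod_type_right]
  refine Finset.sum_congr rfl fun y _ => ?_
  rw [← sum_dist_pair_left μ A B y, Finset.sum_mul]

lemma H_comp_of_injective (μ : FinPMF Ω) (A : Ω → α) {g : α → β} (hg : g.Injective) :
    H μ (fun ω => g (A ω)) = H μ A := by
  have hd : ∀ a, dist μ (fun ω => g (A ω)) (g a) = dist μ A a := fun a =>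
    Finset.sum_congr rfl fun ω _ => by simp [hg.eq_iff]
  have h0 : ∀ c ∈ Finset.univ, c ∉ Finset.univ.image g →
      dist μ (fun ω => g (A ω)) c * Real.log (dist μ (fun ω => g (A ω)) c) = 0 := by
    intro c _ hc
    have : dist μ (fun ω => g (A ω)) c = 0 := Finset.sum_eq_zero fun ω _ => by
      have : g (A ω) ≠ c := fun h => hc (Finset.mem_image.mpr ⟨A ω, Finset.mem_univ _, h⟩)
      simp [this]
    simp [this]
  unfold H
  rw [← Finset.sum_subset (Finset.subset_univ (Finset.univ.image g)) h0,
    Finset.sum_image fun a _ a' _ h => hg h]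
  simp_rw [hd]

lemma MI_eq_neg_sum (μ : FinPMF Ω) (A : Ω → α) (B : Ω → β) :
    MI μ A B = -∑ x : α × β, dist μ (fun ω => (A ω, B ω)) x *
      (Real.log (dist μ A x.1) + Real.log (dist μ B x.2) -
        Real.log (dist μ (fun ω => (A ω, B ω)) x)) := by
  simp only [mul_sub, mul_add, Finset.sum_sub_distrib, Finset.sum_add_distrib,
    sum_dist_pair_mul_fst μ A B fun a => Real.log (dist μ A a),
    sum_dist_pair_mul_snd μ A B fun y => Real.log (dist μ B y)]
  unfold MI H
  ring

lemma MI_nonneg (μ : FinPMF Ω) (A : Ω → α) (B : Ω → β) : 0 ≤ MI μ A B := by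
  rw [MI_eq_neg_sum, neg_nonneg]
  calc _ ≤ ∑ x : α × β, (dist μ A x.1 * dist μ B x.2 - dist μ (fun ω => (A ω, B ω)) x) :=
        Finset.sum_le_sum fun x _ => mul_log_add_log_sub_log_le (dist_nonneg μ _ x)
          (dist_pair_le_fst μ A B x.1 x.2) (dist_pair_le_snd μ A B x.1 x.2)
    _ = (∑ a, dist μ A a) * (∑ y, dist μ B y) - ∑ x, dist μ (fun ω => (A ω, B ω)) x := by
      rw [Finset.sum_sub_distrib, Finset.sum_mul_sum, Fintype.sum_prod_type]
    _ = 0 := by rw [sum_dist, sum_dist, sum_dist, one_mul, sub_self]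

end

/-- Let `X` and `Y` be jointly distributed finitely-valued random variables and let
`B = b(X)` and `L = ℓ(Y)`.  Then
`I(Y; B, L) ≤ I(Y; L) + I(X; Y) − H(X) + H(B) + H(X | Y, B)`. -/
theorem MI_bin_bound {Ω 𝒳 𝒴 ℬ 𝓛 : Type} [Fintype Ω] [Fintype 𝒳] [DecidableEq 𝒳]
    [Fintype 𝒴] [DecidableEq 𝒴] [Fintype ℬ] [DecidableEq ℬ] [Fintype 𝓛] [DecidableEq 𝓛]
    (μ : FinPMF Ω) (X : Ω → 𝒳) (Y : Ω → 𝒴) (b : 𝒳 → ℬ) (l : 𝒴 → 𝓛) :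
    MI μ Y (fun ω => (b (X ω), l (Y ω))) ≤
      MI μ Y (fun ω => l (Y ω)) + MI μ X Y - H μ X + H μ (fun ω => b (X ω)) +
      condH μ X (fun ω => (Y ω, b (X ω))) := by
  have hYBL : H μ (fun ω => (Y ω, b (X ω), l (Y ω))) = H μ (fun ω => (Y ω, b (X ω))) :=
    H_comp_of_injective μ (fun ω => (Y ω, b (X ω))) (g := fun p => (p.1, p.2, l p.1))
      fun p q h => by simp only [Prod.mk.injEq] at h; exact Prod.ext h.1 h.2.1
  have hYL : H μ (fun ω => (Y ω, l (Y ω))) = H μ Y :=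
    H_comp_of_injective μ Y (g := fun y => (y, l y)) fun y y' h => congrArg Prod.fst h
  have hXYB : H μ (fun ω => (X ω, Y ω, b (X ω))) = H μ (fun ω => (X ω, Y ω)) :=
    H_comp_of_injective μ (fun ω => (X ω, Y ω)) (g := fun p => (p.1, p.2, b p.1))
      fun p q h => by simp only [Prod.mk.injEq] at h; exact Prod.ext h.1 h.2.1
  have hBL := MI_nonneg μ (fun ω => b (X ω)) (fun ω => l (Y ω))
  simp only [MI, condH] at hBL ⊢
  rw [hYBL, hYL, hXYB]
  linarith

end FinPMF
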